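/- arXiv:cs/0412021 — 9 statements merged into one kernel-verified Lean document; each statement's English description precedes it below -/
import Mathlib

section
/- For the constraint c_lin given by x₁ = 3·x₂ + 5·x₃ on three variables, the domain D₃ with D₃(x₁) = {3,4,6}, D₃(x₂) = [0,2] and D₃(x₃) = [0,1] is bounds(Z) consistent for c_lin but not bounds(D) consistent for c_lin. Hence bounds(Z) consistency does not imply bounds(D) consistency. -/
/-- An integer valuation is an integer solution of constraint `c` if its
coercion to reals lies in `c`. -/
def IsIntSolution {n : ℕ} (c : Set (Fin n → ℝ)) (θ : Fin n → ℤ) : Prop :=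
  (fun j => (θ j : ℝ)) ∈ c

/-- `D` is bounds(D) consistent for `c`. -/
def BoundsDConsistent {n : ℕ} (D : Fin n → Finset ℤ) (hD : ∀ i, (D i).Nonempty)
    (c : Set (Fin n → ℝ)) : Prop :=
  ∀ i : Fin n, ∀ d ∈ ({(D i).min' (hD i), (D i).max' (hD i)} : Set ℤ),
    ∃ θ : Fin n → ℤ, IsIntSolution c θ ∧ θ i = d ∧ ∀ j, θ j ∈ D j

/-- `D` is bounds(Z) consistent for `c`. -/
def BoundsZConsistent {n : ℕ} (D : Fin n → Finset ℤ) (hD : ∀ i, (D i).Nonempty)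
    (c : Set (Fin n → ℝ)) : Prop :=
  ∀ i : Fin n, ∀ d ∈ ({(D i).min' (hD i), (D i).max' (hD i)} : Set ℤ),
    ∃ θ : Fin n → ℤ, IsIntSolution c θ ∧ θ i = d ∧
      ∀ j, (D j).min' (hD j) ≤ θ j ∧ θ j ≤ (D j).max' (hD j)

/-- `D` is bounds(R) consistent for `c`. -/
def BoundsRConsistent {n : ℕ} (D : Fin n → Finset ℤ) (hD : ∀ i, (D i).Nonempty)
    (c : Set (Fin n → ℝ)) : Prop :=
  ∀ i : Fin n, ∀ d ∈ ({(D i).min' (hD i), (D i).max' (hD i)} : Set ℤ),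
    ∃ θ : Fin n → ℝ, θ ∈ c ∧ θ i = (d : ℝ) ∧
      ∀ j, ((D j).min' (hD j) : ℝ) ≤ θ j ∧ θ j ≤ ((D j).max' (hD j) : ℝ)

/-- `D` is domain consistent for `c`. -/
def DomainConsistent {n : ℕ} (D : Fin n → Finset ℤ) (c : Set (Fin n → ℝ)) : Prop :=
  ∀ i : Fin n, ∀ d ∈ D i,
    ∃ θ : Fin n → ℤ, IsIntSolution c θ ∧ θ i = d ∧ ∀ j, θ j ∈ D j

/-- The constraint `x₁ = 3·x₂ + 5·x₃`. -/
def cLin : Set (Fin 3 → ℝ) := {θ | θ 0 = 3 * θ 1 + 5 * θ 2}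

/-- The domain `D₃` with `D₃(x₁) = {3,4,6}`, `D₃(x₂) = [0,2]`, `D₃(x₃) = [0,1]`. -/
noncomputable def D₃ : Fin 3 → Finset ℤ := ![{3, 4, 6}, Finset.Icc 0 2, Finset.Icc 0 1]

/-! The integer solutions `(3,1,0)`, `(6,2,0)` and `(5,0,1)` of `x₁ = 3x₂ + 5x₃` lie in the
bounding box `[3,6] × [0,2] × [0,1]` of `D₃` and between them attain all six bounds, so `D₃` is
bounds(Z) consistent. At the lower bound `x₂ = 0`, however, the constraint forces
`x₁ = 5x₃ ∈ {0, 5}`, and neither value lies in `D₃(x₁) = {3, 4, 6}`. -/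

theorem Finset.min'_Icc {α : Type*} [LinearOrder α] [LocallyFiniteOrder α] {a b : α}
    (h : (Finset.Icc a b).Nonempty) : (Finset.Icc a b).min' h = a :=
  (Finset.min'_eq_iff _ _ _).2
    ⟨Finset.left_mem_Icc.2 (Finset.nonempty_Icc.1 h), fun _ hx => (Finset.mem_Icc.1 hx).1⟩

theorem Finset.max'_Icc {α : Type*} [LinearOrder α] [LocallyFiniteOrder α] {a b : α}
    (h : (Finset.Icc a b).Nonempty) : (Finset.Icc a b).max' h = b :=
  (Finset.max'_eq_iff _ _ _).2
    ⟨Finset.right_mem_Icc.2 (Finset.nonempty_Icc.1 h), fun _ hx => (Finset.mem_Icc.1 hx).2⟩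

theorem isIntSolution_cLin_iff {θ : Fin 3 → ℤ} :
    IsIntSolution cLin θ ↔ θ 0 = 3 * θ 1 + 5 * θ 2 := by
  change (θ 0 : ℝ) = 3 * θ 1 + 5 * θ 2 ↔ _
  norm_cast

theorem D₃_min' {i : Fin 3} (h : (D₃ i).Nonempty) : (D₃ i).min' h = ![3, 0, 0] i := by
  fin_cases i <;> simp [D₃, Finset.min'_Icc]

theorem D₃_max' {i : Fin 3} (h : (D₃ i).Nonempty) : (D₃ i).max' h = ![6, 2, 1] i := by
  fin_cases i <;> simp [D₃, Finset.max'_Icc]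

def cLinSupports : Finset (Fin 3 → ℤ) := {![3, 1, 0], ![6, 2, 0], ![5, 0, 1]}

theorem cLinSupports_solve_within_bounds : ∀ θ ∈ cLinSupports,
    θ 0 = 3 * θ 1 + 5 * θ 2 ∧ ∀ j, ![3, 0, 0] j ≤ θ j ∧ θ j ≤ ![6, 2, 1] j := by
  decide

theorem cLinSupports_attain_bounds :
    ∀ i : Fin 3, ∀ d ∈ ({![3, 0, 0] i, ![6, 2, 1] i} : Finset ℤ), ∃ θ ∈ cLinSupports, θ i = d := by
  decide

theorem boundsZConsistent_D₃_cLin (hD : ∀ i, (D₃ i).Nonempty) :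
    BoundsZConsistent D₃ hD cLin := by
  intro i d hd
  simp only [D₃_min', D₃_max'] at hd ⊢
  obtain ⟨θ, hθ, rfl⟩ :=
    cLinSupports_attain_bounds i d (by rwa [← Finset.mem_coe, Finset.coe_pair])
  obtain ⟨hsol, hbounds⟩ := cLinSupports_solve_within_bounds θ hθ
  exact ⟨θ, isIntSolution_cLin_iff.2 hsol, rfl, hbounds⟩

theorem not_boundsDConsistent_D₃_cLin (hD : ∀ i, (D₃ i).Nonempty) :
    ¬ BoundsDConsistent D₃ hD cLin := by
  intro h
  obtain ⟨θ, hsol, hθ₁, hmem⟩ := h 1 _ (Or.inl rfl)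
  have hθ₁ : θ 1 = 0 := hθ₁.trans (D₃_min' (hD 1))
  have hθ₀ : θ 0 ∈ ({3, 4, 6} : Finset ℤ) := hmem 0
  have hθ₂ : θ 2 ∈ Finset.Icc 0 1 := hmem 2
  rw [isIntSolution_cLin_iff] at hsol
  simp only [Finset.mem_insert, Finset.mem_singleton, Finset.mem_Icc] at hθ₀ hθ₂
  omega

theorem boundsZ_not_boundsD_cLin (hD : ∀ i, (D₃ i).Nonempty) :
    BoundsZConsistent D₃ hD cLin ∧ ¬ BoundsDConsistent D₃ hD cLin :=
  ⟨boundsZConsistent_D₃_cLin hD, not_boundsDConsistent_D₃_cLin hD⟩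
end

section
/- Reduction of SUBSET SUM to domain-consistency checking: let a : Fin n → ℕ and t : ℕ. Consider the linear equality constraint on n+2 integer variables given by (Σ_{i < n} a i · x i) − t · x_n − (Σ_{i < n} a i) · x_{n+1} = 0, and the domain D assigning {0,1} to every variable. Then D is domain consistent for this constraint if and only if there exists a subset S ⊆ Fin n with Σ_{i ∈ S} a i = t. -/
/-- SUBSET SUM reduces to domain-consistency checking: for the linear equality
`(Σ_{i<n} a i · x i) − t · x_n − (Σ_{i<n} a i) · x_{n+1} = 0` on `n+2` variables,
with every variable having domain `{0,1}`, the domain is domain consistent for the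
constraint iff some subset of the `a i` sums to `t`. -/
theorem domainConsistent_iff_subsetSum (n : ℕ) (a : Fin n → ℕ) (t : ℕ) :
    (∀ i : Fin (n + 2), ∀ d ∈ ({0, 1} : Finset ℤ),
      ∃ θ : Fin (n + 2) → ℤ,
        ((∑ k : Fin n, (a k : ℤ) * θ (Fin.castSucc (Fin.castSucc k))) -
            (t : ℤ) * θ ⟨n, by omega⟩ -
            (∑ k : Fin n, (a k : ℤ)) * θ ⟨n + 1, by omega⟩ = 0) ∧
        θ i = d ∧ ∀ j, θ j ∈ ({0, 1} : Finset ℤ)) ↔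
    ∃ S : Finset (Fin n), ∑ i ∈ S, a i = t := by
  constructor
  · intro h
    obtain ⟨θ, hc, hn, hd⟩ := h ⟨n, by omega⟩ 1 (by simp)
    have h01 : ∀ j, θ j = 0 ∨ θ j = 1 := by
      intro j
      have := hd j
      simpa using this
    have key : ∀ k : Fin n, (a k : ℤ) * θ (Fin.castSucc (Fin.castSucc k)) =
        if θ (Fin.castSucc (Fin.castSucc k)) = 1 then (a k : ℤ) else 0 := by
      intro k
      rcases h01 (Fin.castSucc (Fin.castSucc k)) with h | h <;> simp [h]
    set S : Finset (Fin n) :=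
      Finset.univ.filter (fun k => θ (Fin.castSucc (Fin.castSucc k)) = 1) with hSdef
    have hsum : (∑ k : Fin n, (a k : ℤ) * θ (Fin.castSucc (Fin.castSucc k))) =
        ∑ k ∈ S, (a k : ℤ) := by
      rw [hSdef, Finset.sum_filter]
      exact Finset.sum_congr rfl (fun k _ => key k)
    rw [hsum, hn] at hc
    rcases h01 ⟨n + 1, by omega⟩ with h0 | h1
    · refine ⟨S, ?_⟩
      have : (∑ k ∈ S, (a k : ℤ)) = (t : ℤ) := by rw [h0] at hc; linarith
      exact_mod_cast this
    · have hle : (∑ k ∈ S, (a k : ℤ)) ≤ ∑ k : Fin n, (a k : ℤ) :=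
        Finset.sum_le_sum_of_subset_of_nonneg (Finset.subset_univ S)
          (fun k _ _ => by positivity)
      rw [h1] at hc
      have ht : (t : ℤ) ≤ 0 := by linarith
      have : t = 0 := by exact_mod_cast le_antisymm (by exact_mod_cast ht) (Nat.zero_le t)
      exact ⟨∅, by simp [this]⟩
  · rintro ⟨S, hS⟩ i d hd
    simp only [Finset.mem_insert, Finset.mem_singleton] at hd
    rcases hd with rfl | rfl
    · exact ⟨fun _ => 0, by simp, rfl, fun j => by simp⟩
    · by_cases hi : (i : ℕ) = n
      · -- use θ₁ : indicator of S, x_n = 1, x_{n+1} = 0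
        refine ⟨fun j => if h : (j : ℕ) < n then (if (⟨(j : ℕ), h⟩ : Fin n) ∈ S then 1 else 0)
            else if (j : ℕ) = n then 1 else 0, ?_, ?_, ?_⟩
        · have hcc : ∀ k : Fin n,
              (if h : ((Fin.castSucc (Fin.castSucc k) : Fin (n+2)) : ℕ) < n then
                (if (⟨((Fin.castSucc (Fin.castSucc k) : Fin (n+2)) : ℕ), h⟩ : Fin n) ∈ S then (1:ℤ) else 0)
              else if ((Fin.castSucc (Fin.castSucc k) : Fin (n+2)) : ℕ) = n then 1 else 0) =
                (if k ∈ S then 1 else 0) := by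
            intro k
            have hk : ((Fin.castSucc (Fin.castSucc k) : Fin (n+2)) : ℕ) = (k : ℕ) := rfl
            rw [dif_pos (by rw [hk]; exact k.isLt)]
            have he : (⟨((Fin.castSucc (Fin.castSucc k) : Fin (n+2)) : ℕ),
                by rw [hk]; exact k.isLt⟩ : Fin n) = k := Fin.ext hk
            rw [he]
          simp only [hcc]
          have : (∑ k : Fin n, (a k : ℤ) * if k ∈ S then 1 else 0) = ∑ k ∈ S, (a k : ℤ) := by
            simp only [mul_ite, mul_one, mul_zero, Finset.sum_ite_mem, Finset.univ_inter]
          rw [this]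
          have h2 : (∑ k ∈ S, (a k : ℤ)) = (t : ℤ) := by exact_mod_cast hS
          simp [h2]
        · simp [hi]
        · intro j
          by_cases hj : (j : ℕ) < n
          · by_cases hjS : (⟨(j : ℕ), hj⟩ : Fin n) ∈ S <;> simp [hj, hjS]
          · by_cases hjn : (j : ℕ) = n <;> simp [hj, hjn]
      · -- use θ₂ : all ones except x_n = 0
        refine ⟨fun j => if (j : ℕ) = n then 0 else 1, ?_, ?_, ?_⟩
        · have hcc : ∀ k : Fin n,
              (if ((Fin.castSucc (Fin.castSucc k) : Fin (n+2)) : ℕ) = n then (0:ℤ) else 1) = 1 := by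
            intro k
            have : ((Fin.castSucc (Fin.castSucc k) : Fin (n+2)) : ℕ) = (k : ℕ) := rfl
            rw [this, if_neg (by omega)]
          simp only [hcc]
          simp
        · simp [hi]
        · intro j
          by_cases hj : (j : ℕ) = n <;> simp [hj]
end

section
/- Let c be an n-ary monotonic constraint relative to a domain D (that is, for every variable i there is a polarity ε i ∈ {1, −1} such that whenever θ ∈ c satisfies (inf_D j : ℝ) ≤ θ j ≤ (sup_D j : ℝ) for all j, and θ' : Fin n → ℝ agrees with θ on all variables other than i, satisfies (inf_D i : ℝ) ≤ θ' i ≤ (sup_D i : ℝ), and (ε i) · θ' i ≤ (ε i) · θ i, then θ' ∈ c). If D is bounds(R) consistent for c, then D is domain consistent for c; consequently bounds(R), bounds(Z), bounds(D) and domain consistency for c are all equivalent. -/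
/-!
To support `d ∈ D i`, take the real solution in the box with `θ i = b` given by bounds(R)
consistency, where `b` is the bound of `D i` maximising `ε i * x`. Replace its coordinates one at a time by those of the integer valuation that is `d`
at `i` and, at `j ≠ i`, the bound of `D j` minimising `ε j * x`. Each replacement stays in the
box and does not increase `ε j * θ j`, so monotonicity keeps the valuation in `c`. The converse
implications hold for every constraint: each consistency notion asks for weaker supports than
the previous one.
-/

section Monotonic

variable {ι : Type*}

def IsMonotonicConstraint (c : Set (ι → ℝ)) (lo hi ε : ι → ℝ) : Prop :=
  ∀ i, ∀ θ ∈ c, (∀ j, lo j ≤ θ j ∧ θ j ≤ hi j) →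
    ∀ θ' : ι → ℝ, (∀ j, j ≠ i → θ' j = θ j) → (lo i ≤ θ' i ∧ θ' i ≤ hi i) →
      ε i * θ' i ≤ ε i * θ i → θ' ∈ c

theorem IsMonotonicConstraint.mem_of_forall_mul_le [Fintype ι] [DecidableEq ι]
    {c : Set (ι → ℝ)} {lo hi ε : ι → ℝ} (hc : IsMonotonicConstraint c lo hi ε)
    {θ θ' : ι → ℝ} (hθ : θ ∈ c) (hθbox : ∀ j, lo j ≤ θ j ∧ θ j ≤ hi j)
    (hθ'box : ∀ j, lo j ≤ θ' j ∧ θ' j ≤ hi j) (hle : ∀ j, ε j * θ' j ≤ ε j * θ j) :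
    θ' ∈ c := by
  have hbox : ∀ S : Finset ι, ∀ j, lo j ≤ S.piecewise θ' θ j ∧ S.piecewise θ' θ j ≤ hi j :=
    fun S j => by by_cases hj : j ∈ S <;> simp [hj, hθbox j, hθ'box j]
  have hmem : ∀ S : Finset ι, S.piecewise θ' θ ∈ c := by
    intro S
    induction S using Finset.induction_on with
    | empty => simpa using hθ
    | insert i S hiS ih =>
      rw [Finset.piecewise_insert]
      refine hc i _ ih (hbox S) _ (fun j hj => Function.update_of_ne hj _ _) ?_ ?_
      · simpa using hθ'box i
      · simpa [Finset.piecewise_eq_of_notMem _ _ _ hiS] using hle i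
  simpa using hmem Finset.univ

end Monotonic

theorem exists_endpoint_minimizing_mul (e : ℝ) (lo hi : ℤ) :
    ∃ b ∈ ({lo, hi} : Set ℤ), ∀ x : ℝ, (lo : ℝ) ≤ x → x ≤ hi → e * b ≤ e * x := by
  rcases le_total 0 e with he | he
  · exact ⟨lo, Or.inl rfl, fun x hlo _ => mul_le_mul_of_nonneg_left hlo he⟩
  · exact ⟨hi, Or.inr rfl, fun x _ hhi => mul_le_mul_of_nonpos_left hhi he⟩

theorem exists_endpoint_maximizing_mul (e : ℝ) (lo hi : ℤ) :
    ∃ b ∈ ({lo, hi} : Set ℤ), ∀ x : ℝ, (lo : ℝ) ≤ x → x ≤ hi → e * x ≤ e * b := by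
  simpa only [neg_mul, neg_le_neg_iff] using exists_endpoint_minimizing_mul (-e) lo hi

theorem Finset.mem_of_mem_min'_max' {α : Type*} [LinearOrder α] {s : Finset α}
    (hs : s.Nonempty) {b : α} (hb : b ∈ ({s.min' hs, s.max' hs} : Set α)) : b ∈ s := by
  rcases hb with rfl | rfl
  exacts [s.min'_mem hs, s.max'_mem hs]

section Consistency

variable {n : ℕ} {D : Fin n → Finset ℤ} {c : Set (Fin n → ℝ)}

theorem DomainConsistent.boundsDConsistent (hD : ∀ i, (D i).Nonempty)
    (h : DomainConsistent D c) : BoundsDConsistent D hD c :=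
  fun i _ hb => h i _ (Finset.mem_of_mem_min'_max' (hD i) hb)

theorem BoundsDConsistent.boundsZConsistent {hD : ∀ i, (D i).Nonempty}
    (h : BoundsDConsistent D hD c) : BoundsZConsistent D hD c := by
  intro i d hd
  obtain ⟨θ, hθ, hθi, hθD⟩ := h i d hd
  exact ⟨θ, hθ, hθi, fun j => ⟨(D j).min'_le _ (hθD j), (D j).le_max' _ (hθD j)⟩⟩

theorem BoundsZConsistent.boundsRConsistent {hD : ∀ i, (D i).Nonempty}
    (h : BoundsZConsistent D hD c) : BoundsRConsistent D hD c := by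
  intro i d hd
  obtain ⟨θ, hθ, hθi, hθbox⟩ := h i d hd
  exact ⟨fun j => (θ j : ℝ), hθ, congrArg Int.cast hθi,
    fun j => ⟨Int.cast_le.mpr (hθbox j).1, Int.cast_le.mpr (hθbox j).2⟩⟩

theorem BoundsRConsistent.domainConsistent {hD : ∀ i, (D i).Nonempty} {ε : Fin n → ℝ}
    (hc : IsMonotonicConstraint c (fun j => ((D j).min' (hD j) : ℝ))
      (fun j => ((D j).max' (hD j) : ℝ)) ε)
    (h : BoundsRConsistent D hD c) : DomainConsistent D c := by
  intro i d hd
  obtain ⟨b, hb, hdb⟩ :=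
    exists_endpoint_maximizing_mul (ε i) ((D i).min' (hD i)) ((D i).max' (hD i))
  obtain ⟨θ, hθ, hθi, hθbox⟩ := h i b hb
  choose w hw hwθ using fun j =>
    exists_endpoint_minimizing_mul (ε j) ((D j).min' (hD j)) ((D j).max' (hD j))
  have htD : ∀ j, Function.update w i d j ∈ D j := by
    intro j
    rcases eq_or_ne j i with rfl | hj
    · simpa using hd
    · simpa [hj] using Finset.mem_of_mem_min'_max' (hD j) (hw j)
  refine ⟨Function.update w i d, ?_, Function.update_self .., htD⟩
  refine hc.mem_of_forall_mul_le hθ hθbox (fun j => ⟨Int.cast_le.mpr ((D j).min'_le _ (htD j)),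
    Int.cast_le.mpr ((D j).le_max' _ (htD j))⟩) fun j => ?_
  rcases eq_or_ne j i with rfl | hj
  · simpa [hθi] using hdb d (Int.cast_le.mpr ((D j).min'_le d hd))
      (Int.cast_le.mpr ((D j).le_max' d hd))
  · simpa [hj] using hwθ j (θ j) (hθbox j).1 (hθbox j).2

end Consistency

theorem monotonic_boundsR_imp_domain_general {n : ℕ}
    (D : Fin n → Finset ℤ) (hD : ∀ i, (D i).Nonempty) (c : Set (Fin n → ℝ))
    (ε : Fin n → ℝ)
    (hmono : ∀ i : Fin n, ∀ θ ∈ c,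
      (∀ j, ((D j).min' (hD j) : ℝ) ≤ θ j ∧ θ j ≤ ((D j).max' (hD j) : ℝ)) →
      ∀ θ' : Fin n → ℝ, (∀ j, j ≠ i → θ' j = θ j) →
        (((D i).min' (hD i) : ℝ) ≤ θ' i ∧ θ' i ≤ ((D i).max' (hD i) : ℝ)) →
        ε i * θ' i ≤ ε i * θ i → θ' ∈ c) :
    (BoundsRConsistent D hD c → DomainConsistent D c) ∧
    (BoundsRConsistent D hD c ↔ BoundsZConsistent D hD c) ∧
    (BoundsRConsistent D hD c ↔ BoundsDConsistent D hD c) ∧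
    (BoundsRConsistent D hD c ↔ DomainConsistent D c) := by
  have hRdom : BoundsRConsistent D hD c → DomainConsistent D c :=
    BoundsRConsistent.domainConsistent hmono
  exact ⟨hRdom,
    ⟨fun h => ((hRdom h).boundsDConsistent hD).boundsZConsistent,
      BoundsZConsistent.boundsRConsistent⟩,
    ⟨fun h => (hRdom h).boundsDConsistent hD,
      fun h => h.boundsZConsistent.boundsRConsistent⟩,
    ⟨hRdom, fun h => ((h.boundsDConsistent hD).boundsZConsistent).boundsRConsistent⟩⟩

theorem monotonic_boundsR_imp_domain {n : ℕ} (hn : 1 ≤ n)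
    (D : Fin n → Finset ℤ) (hD : ∀ i, (D i).Nonempty) (c : Set (Fin n → ℝ))
    (ε : Fin n → ℝ) (hε : ∀ i, ε i = 1 ∨ ε i = -1)
    (hmono : ∀ i : Fin n, ∀ θ ∈ c,
      (∀ j, ((D j).min' (hD j) : ℝ) ≤ θ j ∧ θ j ≤ ((D j).max' (hD j) : ℝ)) →
      ∀ θ' : Fin n → ℝ, (∀ j, j ≠ i → θ' j = θ j) →
        (((D i).min' (hD i) : ℝ) ≤ θ' i ∧ θ' i ≤ ((D i).max' (hD i) : ℝ)) →
        ε i * θ' i ≤ ε i * θ i → θ' ∈ c) :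
    (BoundsRConsistent D hD c → DomainConsistent D c) ∧
    (BoundsRConsistent D hD c ↔ BoundsZConsistent D hD c) ∧
    (BoundsRConsistent D hD c ↔ BoundsDConsistent D hD c) ∧
    (BoundsRConsistent D hD c ↔ DomainConsistent D c) :=
  monotonic_boundsR_imp_domain_general D hD c ε hmono
end

section
/- For a linear inequality constraint c given by Σ_{i < n} a i · x i ≤ a₀ with integer coefficients a : Fin n → ℤ and a₀ : ℤ, if a domain D is bounds(R) consistent for c then D is domain consistent for c. -/
theorem linIneq_boundsR_imp_domain {n : ℕ} (hn : 1 ≤ n)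
    (a : Fin n → ℤ) (a₀ : ℤ)
    (D : Fin n → Finset ℤ) (hD : ∀ i, (D i).Nonempty)
    (h : BoundsRConsistent D hD {θ : Fin n → ℝ | ∑ i, (a i : ℝ) * θ i ≤ (a₀ : ℝ)}) :
    DomainConsistent D {θ : Fin n → ℝ | ∑ i, (a i : ℝ) * θ i ≤ (a₀ : ℝ)} := by
  intro i d hd
  classical
  set e : ℤ := if 0 ≤ a i then (D i).max' (hD i) else (D i).min' (hD i) with he
  have hemem : e ∈ ({(D i).min' (hD i), (D i).max' (hD i)} : Set ℤ) := by
    by_cases h0 : 0 ≤ a i <;> simp [he, h0]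
  obtain ⟨θ, hθc, hθi, hθb⟩ := h i e hemem
  set θ' : Fin n → ℤ := fun j =>
    if j = i then d else (if 0 ≤ a j then (D j).min' (hD j) else (D j).max' (hD j)) with hθ'
  refine ⟨θ', ?_, by simp [hθ'], ?_⟩
  · unfold IsIntSolution
    simp only [Set.mem_setOf_eq]
    have key : ∀ j, (a j : ℝ) * ((θ' j : ℤ) : ℝ) ≤ (a j : ℝ) * θ j := by
      intro j
      by_cases hji : j = i
      · subst hji
        simp only [hθ', if_pos rfl, hθi]
        by_cases h0 : 0 ≤ a j
        · have hd' : (d : ℝ) ≤ (e : ℝ) := by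
            rw [he, if_pos h0]; exact_mod_cast (D j).le_max' d hd
          exact mul_le_mul_of_nonneg_left hd' (by exact_mod_cast h0)
        · have hd' : (e : ℝ) ≤ (d : ℝ) := by
            rw [he, if_neg h0]; exact_mod_cast (D j).min'_le d hd
          exact mul_le_mul_of_nonpos_left hd' (by exact_mod_cast le_of_not_ge h0)
      · simp only [hθ', if_neg hji]
        by_cases h0 : 0 ≤ a j
        · simp only [if_pos h0]
          exact mul_le_mul_of_nonneg_left (hθb j).1 (by exact_mod_cast h0)
        · simp only [if_neg h0]
          exact mul_le_mul_of_nonpos_left (hθb j).2 (by exact_mod_cast le_of_not_ge h0)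
    calc ∑ j, (a j : ℝ) * (θ' j : ℝ) ≤ ∑ j, (a j : ℝ) * θ j := Finset.sum_le_sum (fun j _ => key j)
      _ ≤ (a₀ : ℝ) := hθc
  · intro j
    by_cases hji : j = i
    · subst hji; simp [hθ', hd]
    · simp only [hθ', if_neg hji]
      by_cases h0 : 0 ≤ a j <;> simp [h0, Finset.min'_mem, Finset.max'_mem]
end

section
/- For the constraint c given by x₁ · x₂ ≤ x₃ on three variables, if every element of every D i is positive (so the domains are non-negative) and the domain D is bounds(R) consistent for c, then D is domain consistent for c. -/
theorem mul_le_boundsR_imp_domain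
    (D : Fin 3 → Finset ℤ) (hD : ∀ i, (D i).Nonempty)
    (hpos : ∀ i : Fin 3, ∀ d ∈ D i, 1 ≤ d)
    (h : BoundsRConsistent D hD {θ : Fin 3 → ℝ | θ 0 * θ 1 ≤ θ 2}) :
    DomainConsistent D {θ : Fin 3 → ℝ | θ 0 * θ 1 ≤ θ 2} := by
  have h1 : ∀ i, (1:ℤ) ≤ (D i).min' (hD i) := fun i => hpos i _ ((D i).min'_mem (hD i))
  have h1' : ∀ i, (1:ℤ) ≤ (D i).max' (hD i) := fun i => hpos i _ ((D i).max'_mem (hD i))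
  -- key inequality 1 : max D0 * min D1 ≤ max D2
  have k1 : (D 0).max' (hD 0) * (D 1).min' (hD 1) ≤ (D 2).max' (hD 2) := by
    obtain ⟨θ, hθc, hθ0, hθb⟩ := h 0 ((D 0).max' (hD 0)) (by simp)
    simp only [Set.mem_setOf_eq] at hθc
    have hq : ((D 0).max' (hD 0) : ℝ) * ((D 1).min' (hD 1) : ℝ) ≤ ((D 2).max' (hD 2) : ℝ) := by
      have hM0 : (1:ℝ) ≤ ((D 0).max' (hD 0) : ℝ) := by exact_mod_cast h1' 0
      rw [hθ0] at hθc
      have := mul_le_mul_of_nonneg_left (hθb 1).1 (le_trans zero_le_one hM0)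
      linarith [(hθb 2).2]
    exact_mod_cast hq
  -- key inequality 2 : min D0 * max D1 ≤ max D2
  have k2 : (D 0).min' (hD 0) * (D 1).max' (hD 1) ≤ (D 2).max' (hD 2) := by
    obtain ⟨θ, hθc, hθ1, hθb⟩ := h 1 ((D 1).max' (hD 1)) (by simp)
    simp only [Set.mem_setOf_eq] at hθc
    have hq : ((D 0).min' (hD 0) : ℝ) * ((D 1).max' (hD 1) : ℝ) ≤ ((D 2).max' (hD 2) : ℝ) := by
      have hM1 : (1:ℝ) ≤ ((D 1).max' (hD 1) : ℝ) := by exact_mod_cast h1' 1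
      rw [hθ1] at hθc
      have := mul_le_mul_of_nonneg_right (hθb 0).1 (le_trans zero_le_one hM1)
      linarith [(hθb 2).2]
    exact_mod_cast hq
  -- key inequality 3 : min D0 * min D1 ≤ min D2
  have k3 : (D 0).min' (hD 0) * (D 1).min' (hD 1) ≤ (D 2).min' (hD 2) := by
    obtain ⟨θ, hθc, hθ2, hθb⟩ := h 2 ((D 2).min' (hD 2)) (by simp)
    simp only [Set.mem_setOf_eq] at hθc
    have hq : ((D 0).min' (hD 0) : ℝ) * ((D 1).min' (hD 1) : ℝ) ≤ ((D 2).min' (hD 2) : ℝ) := by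
      have hm0 : (1:ℝ) ≤ ((D 0).min' (hD 0) : ℝ) := by exact_mod_cast h1 0
      have hm1 : (1:ℝ) ≤ ((D 1).min' (hD 1) : ℝ) := by exact_mod_cast h1 1
      rw [hθ2] at hθc
      nlinarith [(hθb 0).1, (hθb 1).1]
    exact_mod_cast hq
  intro i d hd
  fin_cases i
  · have hd1 : 1 ≤ d := hpos 0 d hd
    have hdM : d ≤ (D 0).max' (hD 0) := Finset.le_max' _ _ hd
    refine ⟨![d, (D 1).min' (hD 1), (D 2).max' (hD 2)], ?_, rfl, ?_⟩
    · have : d * (D 1).min' (hD 1) ≤ (D 2).max' (hD 2) :=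
        le_trans (mul_le_mul_of_nonneg_right hdM (by linarith [h1 1])) k1
      simp only [IsIntSolution, Set.mem_setOf_eq, Matrix.cons_val_zero, Matrix.cons_val_one,
        Matrix.head_cons, Matrix.cons_val_two, Matrix.tail_cons]
      exact_mod_cast this
    · intro j; fin_cases j
      · exact hd
      · exact Finset.min'_mem (D 1) (hD 1)
      · exact Finset.max'_mem (D 2) (hD 2)
  · have hd1 : 1 ≤ d := hpos 1 d hd
    have hdM : d ≤ (D 1).max' (hD 1) := Finset.le_max' _ _ hd
    refine ⟨![(D 0).min' (hD 0), d, (D 2).max' (hD 2)], ?_, rfl, ?_⟩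
    · have : (D 0).min' (hD 0) * d ≤ (D 2).max' (hD 2) :=
        le_trans (mul_le_mul_of_nonneg_left hdM (by linarith [h1 0])) k2
      simp only [IsIntSolution, Set.mem_setOf_eq, Matrix.cons_val_zero, Matrix.cons_val_one,
        Matrix.head_cons, Matrix.cons_val_two, Matrix.tail_cons]
      exact_mod_cast this
    · intro j; fin_cases j
      · exact Finset.min'_mem (D 0) (hD 0)
      · exact hd
      · exact Finset.max'_mem (D 2) (hD 2)
  · have hdm : (D 2).min' (hD 2) ≤ d := Finset.min'_le _ _ hd
    refine ⟨![(D 0).min' (hD 0), (D 1).min' (hD 1), d], ?_, rfl, ?_⟩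
    · have : (D 0).min' (hD 0) * (D 1).min' (hD 1) ≤ d := le_trans k3 hdm
      simp only [IsIntSolution, Set.mem_setOf_eq, Matrix.cons_val_zero, Matrix.cons_val_one,
        Matrix.head_cons, Matrix.cons_val_two, Matrix.tail_cons]
      exact_mod_cast this
    · intro j; fin_cases j
      · exact Finset.min'_mem (D 0) (hD 0)
      · exact Finset.min'_mem (D 1) (hD 1)
      · exact hd
end

section
/- For a linear disequality constraint c given by Σ_{i < n} a i · x i ≠ a₀ with integer coefficients a : Fin n → ℤ and a₀ : ℤ, if a domain D is bounds(R) consistent for c then D is bounds(D) consistent for c; consequently bounds(R), bounds(Z) and bounds(D) consistency for c are equivalent. -/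
lemma aux_intsol {n : ℕ} (a : Fin n → ℤ) (a₀ : ℤ) (θ : Fin n → ℤ) :
    IsIntSolution {θ : Fin n → ℝ | ∑ i, (a i : ℝ) * θ i ≠ (a₀ : ℝ)} θ ↔
      (∑ i, a i * θ i ≠ a₀) := by
  simp only [IsIntSolution, Set.mem_setOf_eq]
  constructor
  · intro h h'; apply h; push_cast [← h']; ring
  · intro h h'; apply h; exact_mod_cast h'

lemma aux_RtoD {n : ℕ} (a : Fin n → ℤ) (a₀ : ℤ)
    (D : Fin n → Finset ℤ) (hD : ∀ i, (D i).Nonempty) :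
    BoundsRConsistent D hD {θ : Fin n → ℝ | ∑ i, (a i : ℝ) * θ i ≠ (a₀ : ℝ)} →
      BoundsDConsistent D hD {θ : Fin n → ℝ | ∑ i, (a i : ℝ) * θ i ≠ (a₀ : ℝ)} := by
  intro hR i d hd
  have hdD : d ∈ D i := by
    rcases hd with h | h
    · exact h ▸ (D i).min'_mem (hD i)
    · simp only [Set.mem_singleton_iff] at h; exact h ▸ (D i).max'_mem (hD i)
  set θ₀ : Fin n → ℤ := fun k => if k = i then d else (D k).min' (hD k) with hθ₀
  have hθ₀mem : ∀ j, θ₀ j ∈ D j := by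
    intro j; by_cases hj : j = i
    · subst hj; simpa [hθ₀] using hdD
    · simpa [hθ₀, hj] using (D j).min'_mem (hD j)
  by_cases hex : ∃ j, j ≠ i ∧ a j ≠ 0 ∧ (D j).min' (hD j) ≠ (D j).max' (hD j)
  · obtain ⟨j, hji, haj, hmm⟩ := hex
    by_cases hs : ∑ k, a k * θ₀ k ≠ a₀
    · exact ⟨θ₀, (aux_intsol a a₀ θ₀).2 hs, by simp [hθ₀], hθ₀mem⟩
    · push_neg at hs
      set θ₁ : Fin n → ℤ := Function.update θ₀ j ((D j).max' (hD j)) with hθ₁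
      refine ⟨θ₁, (aux_intsol a a₀ θ₁).2 ?_, ?_, ?_⟩
      · have h1 : ∑ k, a k * θ₁ k
            = a j * (D j).max' (hD j) + ∑ k ∈ Finset.univ.erase j, a k * θ₀ k := by
          rw [← Finset.add_sum_erase _ _ (Finset.mem_univ j)]
          congr 1
          · simp [hθ₁]
          · refine Finset.sum_congr rfl fun k hk => ?_
            have : k ≠ j := Finset.ne_of_mem_erase hk
            simp [hθ₁, Function.update_of_ne this]
        have h2 : ∑ k, a k * θ₀ k
            = a j * θ₀ j + ∑ k ∈ Finset.univ.erase j, a k * θ₀ k :=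
          (Finset.add_sum_erase _ _ (Finset.mem_univ j)).symm
        rw [h1]
        intro hcon
        rw [h2] at hs
        have : a j * (D j).max' (hD j) = a j * θ₀ j := by linarith
        have hmax : (D j).max' (hD j) = θ₀ j := by
          exact mul_left_cancel₀ haj this
        simp only [hθ₀, if_neg hji] at hmax
        exact hmm hmax.symm
      · simp [hθ₁, Function.update_of_ne (Ne.symm hji), hθ₀]
      · intro k; by_cases hk : k = j
        · subst hk; simpa [hθ₁] using (D k).max'_mem (hD k)
        · simpa [hθ₁, Function.update_of_ne hk] using hθ₀mem k
  · push_neg at hex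
    obtain ⟨θr, hθr, hθri, hθrb⟩ := hR i d hd
    refine ⟨θ₀, (aux_intsol a a₀ θ₀).2 ?_, by simp [hθ₀], hθ₀mem⟩
    intro hcon
    apply hθr
    have key : ∑ k, (a k : ℝ) * θr k = ∑ k, (a k : ℝ) * (θ₀ k : ℝ) := by
      refine Finset.sum_congr rfl fun k _ => ?_
      by_cases hk : k = i
      · subst hk; rw [hθri]; simp [hθ₀]
      · by_cases h0 : a k = 0
        · simp [h0]
        · have hmm := hex k hk h0
          have h1 := (hθrb k).1
          have h2 := (hθrb k).2
          rw [← hmm] at h2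
          have h3 : θr k = ((D k).min' (hD k) : ℝ) := le_antisymm h2 h1
          rw [h3]; simp [hθ₀, hk]
    rw [key]
    exact_mod_cast hcon

lemma aux_DtoZ {n : ℕ} (D : Fin n → Finset ℤ) (hD : ∀ i, (D i).Nonempty)
    (c : Set (Fin n → ℝ)) : BoundsDConsistent D hD c → BoundsZConsistent D hD c := by
  intro h i d hd
  obtain ⟨θ, h1, h2, h3⟩ := h i d hd
  exact ⟨θ, h1, h2, fun j => ⟨(D j).min'_le _ (h3 j), (D j).le_max' _ (h3 j)⟩⟩

lemma aux_ZtoR {n : ℕ} (D : Fin n → Finset ℤ) (hD : ∀ i, (D i).Nonempty)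
    (c : Set (Fin n → ℝ)) : BoundsZConsistent D hD c → BoundsRConsistent D hD c := by
  intro h i d hd
  obtain ⟨θ, h1, h2, h3⟩ := h i d hd
  refine ⟨fun j => (θ j : ℝ), h1, ?_, fun j => ⟨?_, ?_⟩⟩
  · show (θ i : ℝ) = (d : ℝ); exact_mod_cast h2
  · show ((D j).min' (hD j) : ℝ) ≤ (θ j : ℝ); exact_mod_cast (h3 j).1
  · show (θ j : ℝ) ≤ ((D j).max' (hD j) : ℝ); exact_mod_cast (h3 j).2


theorem disequality_boundsR_imp_boundsD {n : ℕ} (hn : 1 ≤ n)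
    (a : Fin n → ℤ) (a₀ : ℤ)
    (D : Fin n → Finset ℤ) (hD : ∀ i, (D i).Nonempty) :
    (BoundsRConsistent D hD {θ : Fin n → ℝ | ∑ i, (a i : ℝ) * θ i ≠ (a₀ : ℝ)} →
      BoundsDConsistent D hD {θ : Fin n → ℝ | ∑ i, (a i : ℝ) * θ i ≠ (a₀ : ℝ)}) ∧
    (BoundsRConsistent D hD {θ : Fin n → ℝ | ∑ i, (a i : ℝ) * θ i ≠ (a₀ : ℝ)} ↔
      BoundsZConsistent D hD {θ : Fin n → ℝ | ∑ i, (a i : ℝ) * θ i ≠ (a₀ : ℝ)}) ∧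
    (BoundsRConsistent D hD {θ : Fin n → ℝ | ∑ i, (a i : ℝ) * θ i ≠ (a₀ : ℝ)} ↔
      BoundsDConsistent D hD {θ : Fin n → ℝ | ∑ i, (a i : ℝ) * θ i ≠ (a₀ : ℝ)}) := by
  have hRD := aux_RtoD a a₀ D hD
  refine ⟨hRD, ⟨fun h => aux_DtoZ D hD _ (hRD h), fun h => aux_ZtoR D hD _ h⟩,
    ⟨hRD, fun h => aux_ZtoR D hD _ (aux_DtoZ D hD _ h)⟩⟩
end

section
/- Let g : ℝ → ℝ be a bijective and strictly monotone (strictly increasing or strictly decreasing) function, and let c be the binary constraint x₁ = g(x₂). If a domain D is bounds(R) consistent for c, then D is bounds(D) consistent for c; consequently bounds(R), bounds(Z) and bounds(D) consistency for c are equivalent. -/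
theorem bijective_monotone_boundsR_imp_boundsD
    (g : ℝ → ℝ) (hg : Function.Bijective g) (hmono : StrictMono g ∨ StrictAnti g)
    (D : Fin 2 → Finset ℤ) (hD : ∀ i, (D i).Nonempty) :
    (BoundsRConsistent D hD {θ : Fin 2 → ℝ | θ 0 = g (θ 1)} →
      BoundsDConsistent D hD {θ : Fin 2 → ℝ | θ 0 = g (θ 1)}) ∧
    (BoundsRConsistent D hD {θ : Fin 2 → ℝ | θ 0 = g (θ 1)} ↔
      BoundsZConsistent D hD {θ : Fin 2 → ℝ | θ 0 = g (θ 1)}) ∧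
    (BoundsRConsistent D hD {θ : Fin 2 → ℝ | θ 0 = g (θ 1)} ↔
      BoundsDConsistent D hD {θ : Fin 2 → ℝ | θ 0 = g (θ 1)}) := by
  set c : Set (Fin 2 → ℝ) := {θ : Fin 2 → ℝ | θ 0 = g (θ 1)} with hc
  have hDZ : BoundsDConsistent D hD c → BoundsZConsistent D hD c := by
    intro h i d hd
    obtain ⟨θ, h1, h2, h3⟩ := h i d hd
    exact ⟨θ, h1, h2, fun j => ⟨Finset.min'_le _ _ (h3 j), Finset.le_max' _ _ (h3 j)⟩⟩
  have hZR : BoundsZConsistent D hD c → BoundsRConsistent D hD c := by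
    intro h i d hd
    obtain ⟨θ, h1, h2, h3⟩ := h i d hd
    refine ⟨fun j => (θ j : ℝ), h1, by show ((θ i : ℝ)) = (d : ℝ); exact_mod_cast h2,
      fun j => ⟨by show _ ≤ ((θ j : ℝ)); exact_mod_cast (h3 j).1,
        by show ((θ j : ℝ)) ≤ _; exact_mod_cast (h3 j).2⟩⟩
  have hRD : BoundsRConsistent D hD c → BoundsDConsistent D hD c := by
    intro hR
    obtain ⟨θa, ha1, ha2, ha3⟩ := hR 0 ((D 0).min' (hD 0)) (by simp)
    obtain ⟨θb, hb1, hb2, hb3⟩ := hR 0 ((D 0).max' (hD 0)) (by simp)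
    obtain ⟨θc, hc1, hc2, hc3⟩ := hR 1 ((D 1).min' (hD 1)) (by simp)
    obtain ⟨θd, hd1, hd2, hd3⟩ := hR 1 ((D 1).max' (hD 1)) (by simp)
    simp only [hc, Set.mem_setOf_eq] at ha1 hb1 hc1 hd1
    rcases hmono with hm | hm
    · -- increasing: min D0 = g (min D1), max D0 = g (max D1)
      have e1 : ((D 0).min' (hD 0) : ℝ) = g ((D 1).min' (hD 1) : ℝ) := by
        refine le_antisymm ?_ ?_
        · rw [← hc2]; exact (hc3 0).1.trans (le_of_eq hc1)
        · rw [← ha2, ha1]; exact hm.monotone (ha3 1).1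
      have e2 : ((D 0).max' (hD 0) : ℝ) = g ((D 1).max' (hD 1) : ℝ) := by
        refine le_antisymm ?_ ?_
        · rw [← hb2, hb1]; exact hm.monotone (hb3 1).2
        · rw [← hd2]; exact (le_of_eq hd1.symm).trans (hd3 0).2
      intro i d hd
      simp only [Set.mem_insert_iff, Set.mem_singleton_iff] at hd
      fin_cases i <;> rcases hd with rfl | rfl
      · exact ⟨![(D 0).min' (hD 0), (D 1).min' (hD 1)], by
          simpa [IsIntSolution, hc] using e1, rfl, by
          intro j; fin_cases j <;> simp [Finset.min'_mem]⟩
      · exact ⟨![(D 0).max' (hD 0), (D 1).max' (hD 1)], by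
          simpa [IsIntSolution, hc] using e2, rfl, by
          intro j; fin_cases j <;> simp [Finset.max'_mem]⟩
      · exact ⟨![(D 0).min' (hD 0), (D 1).min' (hD 1)], by
          simpa [IsIntSolution, hc] using e1, rfl, by
          intro j; fin_cases j <;> simp [Finset.min'_mem]⟩
      · exact ⟨![(D 0).max' (hD 0), (D 1).max' (hD 1)], by
          simpa [IsIntSolution, hc] using e2, rfl, by
          intro j; fin_cases j <;> simp [Finset.max'_mem]⟩
    · -- decreasing: min D0 = g (max D1), max D0 = g (min D1)
      have e1 : ((D 0).min' (hD 0) : ℝ) = g ((D 1).max' (hD 1) : ℝ) := by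
        refine le_antisymm ?_ ?_
        · rw [← hd2, ← hd1]; exact (hd3 0).1
        · rw [← ha2, ha1]; exact hm.antitone (ha3 1).2
      have e2 : ((D 0).max' (hD 0) : ℝ) = g ((D 1).min' (hD 1) : ℝ) := by
        refine le_antisymm ?_ ?_
        · rw [← hb2, hb1]; exact hm.antitone (hb3 1).1
        · rw [← hc2, ← hc1]; exact (hc3 0).2
      intro i d hd
      simp only [Set.mem_insert_iff, Set.mem_singleton_iff] at hd
      fin_cases i <;> rcases hd with rfl | rfl
      · exact ⟨![(D 0).min' (hD 0), (D 1).max' (hD 1)], by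
          simpa [IsIntSolution, hc] using e1, by simp, by
          intro j; fin_cases j <;> simp [Finset.min'_mem, Finset.max'_mem]⟩
      · exact ⟨![(D 0).max' (hD 0), (D 1).min' (hD 1)], by
          simpa [IsIntSolution, hc] using e2, by simp, by
          intro j; fin_cases j <;> simp [Finset.min'_mem, Finset.max'_mem]⟩
      · exact ⟨![(D 0).max' (hD 0), (D 1).min' (hD 1)], by
          simpa [IsIntSolution, hc] using e2, by simp, by
          intro j; fin_cases j <;> simp [Finset.min'_mem, Finset.max'_mem]⟩
      · exact ⟨![(D 0).min' (hD 0), (D 1).max' (hD 1)], by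
          simpa [IsIntSolution, hc] using e1, by simp, by
          intro j; fin_cases j <;> simp [Finset.min'_mem, Finset.max'_mem]⟩
  refine ⟨hRD, ⟨fun h => hDZ (hRD h), hZR⟩, ⟨hRD, fun h => hZR (hDZ h)⟩⟩
end

section
/- Let c be the linear equality constraint a₁·x₁ + Σ_{2 ≤ i ≤ n} a i · x i = a₀ with integer coefficients where |a i| = 1 for all i ≥ 2 (a₀ and a₁ arbitrary integers). If a domain D is bounds(R) consistent for c, then D is bounds(Z) consistent for c; consequently bounds(R) and bounds(Z) consistency for c are equivalent. -/
/-- Any integer in the interval of achievable sums is achieved. -/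
lemma aux_fill {ι : Type*} [DecidableEq ι] (m M : ι → ℤ) (S : Finset ι) :
    ∀ T : ℤ, (∀ j ∈ S, m j ≤ M j) → (∑ j ∈ S, m j) ≤ T → T ≤ ∑ j ∈ S, M j →
    ∃ v : ι → ℤ, (∀ j ∈ S, m j ≤ v j ∧ v j ≤ M j) ∧ ∑ j ∈ S, v j = T := by
  induction S using Finset.induction_on with
  | empty =>
    intro T _ h1 h2
    refine ⟨m, by simp, ?_⟩
    simp only [Finset.sum_empty] at h1 h2 ⊢
    omega
  | @insert j S hjS ih =>
    intro T hmM h1 h2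
    rw [Finset.sum_insert hjS] at h1
    rw [Finset.sum_insert hjS] at h2
    have hmj : m j ≤ M j := hmM j (Finset.mem_insert_self j S)
    have hsum : ∑ i ∈ S, m i ≤ ∑ i ∈ S, M i :=
      Finset.sum_le_sum (fun i hi => hmM i (Finset.mem_insert_of_mem hi))
    set w := max (m j) (min (M j) (T - ∑ i ∈ S, m i)) with hw
    have hw1 : m j ≤ w := le_max_left _ _
    have hw2 : w ≤ M j := max_le hmj (min_le_left _ _)
    have hS1 : ∑ i ∈ S, m i ≤ T - w := by
      have : w ≤ T - ∑ i ∈ S, m i := max_le (by omega) (min_le_right _ _)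
      omega
    have hS2 : T - w ≤ ∑ i ∈ S, M i := by
      have : min (M j) (T - ∑ i ∈ S, m i) ≤ w := le_max_right _ _
      omega
    obtain ⟨v, hv, hvs⟩ := ih (T - w) (fun i hi => hmM i (Finset.mem_insert_of_mem hi)) hS1 hS2
    refine ⟨Function.update v j w, ?_, ?_⟩
    · intro i hi
      rcases Finset.mem_insert.mp hi with rfl|hi'
      · rw [Function.update_self]; exact ⟨hw1, hw2⟩
      · have hne : i ≠ j := by rintro rfl; exact hjS hi'
        rw [Function.update_of_ne hne]
        exact hv i hi'
    · have hsc : ∑ x ∈ S, Function.update v j w x = ∑ x ∈ S, v x :=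
        Finset.sum_congr rfl (fun i hi => Function.update_of_ne (by rintro rfl; exact hjS hi) _ _)
      rw [Finset.sum_insert hjS, Function.update_self, hsc, hvs]
      omega

lemma aux_mul_mem (A L U x : ℝ) (h1 : L ≤ x) (h2 : x ≤ U) :
    min (A*L) (A*U) ≤ A*x ∧ A*x ≤ max (A*L) (A*U) := by
  rcases le_total 0 A with h|h
  · exact ⟨min_le_of_left_le (by nlinarith), le_max_of_le_right (by nlinarith)⟩
  · exact ⟨min_le_of_right_le (by nlinarith), le_max_of_le_left (by nlinarith)⟩

lemma aux_pm (e : ℤ) (he : |e| = 1) : e = 1 ∨ e = -1 := by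
  rcases (abs_eq (by norm_num : (0:ℤ) ≤ 1)).mp he with h|h
  · exact Or.inl h
  · exact Or.inr h

lemma aux_sq (e : ℤ) (he : |e| = 1) : e * e = 1 := by
  rcases aux_pm e he with rfl|rfl <;> ring

lemma aux_unit_bound (e l u v : ℤ) (hlu : l ≤ u) (he : |e| = 1)
    (h1 : min (e*l) (e*u) ≤ v) (h2 : v ≤ max (e*l) (e*u)) :
    l ≤ e*v ∧ e*v ≤ u := by
  rcases aux_pm e he with rfl|rfl <;> simp at * <;> omega

lemma aux_pick (P Q A B mk Mk a₀ akd : ℤ)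
    (h1 : A ≤ a₀ - akd - min P Q) (h2 : a₀ - akd - max P Q ≤ B)
    (h3 : A + mk ≤ a₀ - P) (h4 : a₀ - P ≤ B + Mk)
    (h5 : A + mk ≤ a₀ - Q) (h6 : a₀ - Q ≤ B + Mk)
    (h7 : akd = mk ∨ akd = Mk) :
    (A ≤ a₀ - akd - P ∧ a₀ - akd - P ≤ B) ∨ (A ≤ a₀ - akd - Q ∧ a₀ - akd - Q ≤ B) := by
  omega

theorem unit_coeff_linEq_boundsR_imp_boundsZ {n : ℕ} (hn : 1 ≤ n)
    (a : Fin n → ℤ) (a₀ : ℤ) (ha : ∀ i : Fin n, i ≠ ⟨0, hn⟩ → |a i| = 1)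
    (D : Fin n → Finset ℤ) (hD : ∀ i, (D i).Nonempty) :
    (BoundsRConsistent D hD {θ : Fin n → ℝ | ∑ i, (a i : ℝ) * θ i = (a₀ : ℝ)} →
      BoundsZConsistent D hD {θ : Fin n → ℝ | ∑ i, (a i : ℝ) * θ i = (a₀ : ℝ)}) ∧
    (BoundsRConsistent D hD {θ : Fin n → ℝ | ∑ i, (a i : ℝ) * θ i = (a₀ : ℝ)} ↔
      BoundsZConsistent D hD {θ : Fin n → ℝ | ∑ i, (a i : ℝ) * θ i = (a₀ : ℝ)}) := by
  set c : Set (Fin n → ℝ) := {θ : Fin n → ℝ | ∑ i, (a i : ℝ) * θ i = (a₀ : ℝ)} with hc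
  set l : Fin n → ℤ := fun j => (D j).min' (hD j) with hldef
  set u : Fin n → ℤ := fun j => (D j).max' (hD j) with hudef
  have hlu : ∀ j, l j ≤ u j := fun j => Finset.min'_le _ _ (Finset.max'_mem _ _)
  set z : Fin n := ⟨0, hn⟩ with hz
  set m : Fin n → ℤ := fun j => min (a j * l j) (a j * u j) with hm
  set M : Fin n → ℤ := fun j => max (a j * l j) (a j * u j) with hM
  have hmM : ∀ j, m j ≤ M j := fun j => min_le_max
  have key : ∀ (θ : Fin n → ℝ), (∀ j, (l j : ℝ) ≤ θ j ∧ θ j ≤ (u j : ℝ)) →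
      ∀ S : Finset (Fin n),
      ((∑ j ∈ S, m j : ℤ) : ℝ) ≤ ∑ j ∈ S, (a j : ℝ) * θ j ∧
      ∑ j ∈ S, (a j : ℝ) * θ j ≤ ((∑ j ∈ S, M j : ℤ) : ℝ) := by
    intro θ hb S
    have hpt : ∀ j, ((m j : ℤ) : ℝ) ≤ (a j : ℝ) * θ j ∧ (a j : ℝ) * θ j ≤ ((M j : ℤ) : ℝ) := by
      intro j
      have h := aux_mul_mem (a j : ℝ) (l j) (u j) (θ j) (hb j).1 (hb j).2
      constructor
      · simp only [hm]; push_cast; exact h.1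
      · simp only [hM]; push_cast; exact h.2
    constructor
    · rw [Int.cast_sum]
      exact Finset.sum_le_sum fun j _ => (hpt j).1
    · rw [Int.cast_sum]
      exact Finset.sum_le_sum fun j _ => (hpt j).2
  -- splitting the full (real) sum at z
  have hsplit : ∀ θ : Fin n → ℝ,
      (a z : ℝ) * θ z + ∑ j ∈ Finset.univ.erase z, (a j : ℝ) * θ j =
        ∑ j, (a j : ℝ) * θ j :=
    fun θ => Finset.add_sum_erase Finset.univ (fun j => (a j : ℝ) * θ j) (Finset.mem_univ z)
  have main : BoundsRConsistent D hD c → BoundsZConsistent D hD c := by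
    intro hR i d hd
    have hd' : d = l i ∨ d = u i := by
      simpa only [Set.mem_insert_iff, Set.mem_singleton_iff] using hd
    by_cases hiz : i = z
    · -- case i = z : all remaining coefficients are ±1
      subst hiz
      obtain ⟨θ, hθc, hθz, hθb⟩ := hR z d hd
      have hθc' : ∑ j, (a j : ℝ) * θ j = (a₀ : ℝ) := hθc
      obtain ⟨hA, hB⟩ := key θ hθb (Finset.univ.erase z)
      set A := ∑ j ∈ Finset.univ.erase z, m j with hAdef
      set B := ∑ j ∈ Finset.univ.erase z, M j with hBdef
      have hsp := hsplit θ
      rw [hθc', hθz] at hsp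
      have hT1 : A ≤ a₀ - a z * d := by
        have : ((A : ℤ) : ℝ) ≤ ((a₀ - a z * d : ℤ) : ℝ) := by push_cast; linarith
        exact_mod_cast this
      have hT2 : a₀ - a z * d ≤ B := by
        have : ((a₀ - a z * d : ℤ) : ℝ) ≤ ((B : ℤ) : ℝ) := by push_cast; linarith
        exact_mod_cast this
      obtain ⟨v, hv, hvs⟩ := aux_fill m M (Finset.univ.erase z) (a₀ - a z * d)
        (fun j _ => hmM j) hT1 hT2
      set θ' : Fin n → ℤ := fun j => if j = z then d else a j * v j with hθ'def
      have hθ'z : θ' z = d := by simp [hθ'def]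
      have hθ'j : ∀ j, j ≠ z → θ' j = a j * v j := by
        intro j hj; simp [hθ'def, hj]
      have hint : ∑ j, a j * θ' j = a₀ := by
        have hsp2 : a z * θ' z + ∑ j ∈ Finset.univ.erase z, a j * θ' j =
            ∑ j, a j * θ' j := Finset.add_sum_erase Finset.univ (fun j => a j * θ' j) (Finset.mem_univ z)
        have hcong : ∑ j ∈ Finset.univ.erase z, a j * θ' j =
            ∑ j ∈ Finset.univ.erase z, v j := by
          refine Finset.sum_congr rfl (fun j hj => ?_)
          have hjz := Finset.ne_of_mem_erase hj
          rw [hθ'j j hjz, ← mul_assoc, aux_sq (a j) (ha j hjz), one_mul]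
        rw [← hsp2, hcong, hvs, hθ'z]
        ring
      refine ⟨θ', ?_, hθ'z, ?_⟩
      · show (fun j => ((θ' j : ℤ) : ℝ)) ∈ c
        rw [hc, Set.mem_setOf_eq]
        show ∑ i, (a i : ℝ) * ((θ' i : ℤ) : ℝ) = ((a₀ : ℤ) : ℝ)
        exact_mod_cast hint
      · intro j
        by_cases hj : j = z
        · subst hj
          rw [hθ'z]
          rcases hd' with rfl|rfl
          · exact ⟨le_refl _, hlu z⟩
          · exact ⟨hlu z, le_refl _⟩
        · rw [hθ'j j hj]
          have hjm : j ∈ Finset.univ.erase z := Finset.mem_erase.mpr ⟨hj, Finset.mem_univ j⟩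
          have h := aux_unit_bound (a j) (l j) (u j) (v j) (hlu j) (ha j hj)
            ((by simpa only [hm] using (hv j hjm).1))
            ((by simpa only [hM] using (hv j hjm).2))
          exact h
    · -- case i ≠ z
      obtain ⟨θk, hθkc, hθki, hθkb⟩ := hR i d hd
      obtain ⟨θL, hθLc, hθLz, hθLb⟩ := hR z (l z) (Or.inl rfl)
      obtain ⟨θU, hθUc, hθUz, hθUb⟩ := hR z (u z) (Or.inr rfl)
      have hiz' : i ∈ Finset.univ.erase z := Finset.mem_erase.mpr ⟨hiz, Finset.mem_univ i⟩
      set S : Finset (Fin n) := (Finset.univ.erase z).erase i with hSdef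
      set A := ∑ j ∈ S, m j with hAdef
      set B := ∑ j ∈ S, M j with hBdef
      have hsplit2 : ∀ θ : Fin n → ℝ,
          (a i : ℝ) * θ i + ∑ j ∈ S, (a j : ℝ) * θ j =
            ∑ j ∈ Finset.univ.erase z, (a j : ℝ) * θ j :=
        fun θ => Finset.add_sum_erase (Finset.univ.erase z) (fun j => (a j : ℝ) * θ j) hiz'
      -- facts from the support of x_i = d
      obtain ⟨hkA, hkB⟩ := key θk hθkb S
      have hzk := aux_mul_mem (a z : ℝ) (l z) (u z) (θk z) (hθkb z).1 (hθkb z).2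
      have heqk : (a z : ℝ) * θk z + ((a i : ℝ) * d + ∑ j ∈ S, (a j : ℝ) * θk j)
          = (a₀ : ℝ) := by
        rw [← hθki, hsplit2 θk, hsplit θk]
        exact hθkc
      have h1 : A ≤ a₀ - a i * d - min (a z * l z) (a z * u z) := by
        have hcast : ((min (a z * l z) (a z * u z) : ℤ) : ℝ) ≤ (a z : ℝ) * θk z := by
          push_cast; exact hzk.1
        have : ((A : ℤ) : ℝ) ≤ ((a₀ - a i * d - min (a z * l z) (a z * u z) : ℤ) : ℝ) := by
          rw [hAdef]; push_cast at hcast hkA ⊢; linarith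
        exact_mod_cast this
      have h2 : a₀ - a i * d - max (a z * l z) (a z * u z) ≤ B := by
        have hcast : (a z : ℝ) * θk z ≤ ((max (a z * l z) (a z * u z) : ℤ) : ℝ) := by
          push_cast; exact hzk.2
        have : ((a₀ - a i * d - max (a z * l z) (a z * u z) : ℤ) : ℝ) ≤ ((B : ℤ) : ℝ) := by
          rw [hBdef]; push_cast at hcast hkB ⊢; linarith
        exact_mod_cast this
      -- facts from the supports of the bounds of x_z
      have hzb : ∀ θ : Fin n → ℝ, (θ ∈ c) →
          (∀ j, (l j : ℝ) ≤ θ j ∧ θ j ≤ (u j : ℝ)) → ∀ w : ℤ, θ z = (w : ℝ) →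
          A + m i ≤ a₀ - a z * w ∧ a₀ - a z * w ≤ B + M i := by
        intro θ hceq hbd w hzw
        have hceq' : ∑ j, (a j : ℝ) * θ j = (a₀ : ℝ) := hceq
        obtain ⟨hA', hB'⟩ := key θ hbd S
        obtain ⟨hmi, hMi⟩ := key θ hbd {i}
        simp only [Finset.sum_singleton] at hmi hMi
        have heq : (a z : ℝ) * w + ((a i : ℝ) * θ i + ∑ j ∈ S, (a j : ℝ) * θ j)
            = (a₀ : ℝ) := by
          rw [← hzw, hsplit2 θ, hsplit θ]
          exact hceq'
        constructor
        · have : ((A + m i : ℤ) : ℝ) ≤ ((a₀ - a z * w : ℤ) : ℝ) := by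
            rw [hAdef]; push_cast at hA' hmi ⊢; linarith
          exact_mod_cast this
        · have : ((a₀ - a z * w : ℤ) : ℝ) ≤ ((B + M i : ℤ) : ℝ) := by
            rw [hBdef]; push_cast at hB' hMi ⊢; linarith
          exact_mod_cast this
      obtain ⟨h3, h4⟩ := hzb θL hθLc hθLb (l z) hθLz
      obtain ⟨h5, h6⟩ := hzb θU hθUc hθUb (u z) hθUz
      have h7 : a i * d = m i ∨ a i * d = M i := by
        rcases hd' with rfl|rfl
        · rcases le_total (a i * l i) (a i * u i) with h|h
          · left; simp only [hm]; exact (min_eq_left h).symm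
          · right; simp only [hM]; exact (max_eq_left h).symm
        · rcases le_total (a i * l i) (a i * u i) with h|h
          · right; simp only [hM]; exact (max_eq_right h).symm
          · left; simp only [hm]; exact (min_eq_right h).symm
      have hpick := aux_pick (a z * l z) (a z * u z) A B (m i) (M i) a₀ (a i * d)
        h1 h2 h3 h4 h5 h6 h7
      obtain ⟨t, htl, htu, htA, htB⟩ :
          ∃ t : ℤ, l z ≤ t ∧ t ≤ u z ∧ A ≤ a₀ - a i * d - a z * t ∧
            a₀ - a i * d - a z * t ≤ B := by
        rcases hpick with ⟨hp1, hp2⟩|⟨hp1, hp2⟩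
        · exact ⟨l z, le_refl _, hlu z, hp1, hp2⟩
        · exact ⟨u z, hlu z, le_refl _, hp1, hp2⟩
      obtain ⟨v, hv, hvs⟩ := aux_fill m M S (a₀ - a i * d - a z * t)
        (fun j _ => hmM j) htA htB
      set θ' : Fin n → ℤ := fun j => if j = i then d else if j = z then t else a j * v j
        with hθ'def
      have hθ'i : θ' i = d := by simp [hθ'def]
      have hθ'z : θ' z = t := by
        have hzi : z ≠ i := fun h => hiz h.symm
        simp [hθ'def, hzi]
      have hθ'j : ∀ j, j ≠ i → j ≠ z → θ' j = a j * v j := by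
        intro j hj1 hj2; simp [hθ'def, hj1, hj2]
      have hint : ∑ j, a j * θ' j = a₀ := by
        have hsp2 : a z * θ' z + ∑ j ∈ Finset.univ.erase z, a j * θ' j =
            ∑ j, a j * θ' j := Finset.add_sum_erase Finset.univ (fun j => a j * θ' j) (Finset.mem_univ z)
        have hsp3 : a i * θ' i + ∑ j ∈ S, a j * θ' j =
            ∑ j ∈ Finset.univ.erase z, a j * θ' j := Finset.add_sum_erase (Finset.univ.erase z) (fun j => a j * θ' j) hiz'
        have hcong : ∑ j ∈ S, a j * θ' j = ∑ j ∈ S, v j := by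
          refine Finset.sum_congr rfl (fun j hj => ?_)
          have hji : j ≠ i := Finset.ne_of_mem_erase hj
          have hjz : j ≠ z := Finset.ne_of_mem_erase (Finset.mem_of_mem_erase hj)
          rw [hθ'j j hji hjz, ← mul_assoc, aux_sq (a j) (ha j hjz), one_mul]
        rw [← hsp2, ← hsp3, hcong, hvs, hθ'i, hθ'z]
        ring
      refine ⟨θ', ?_, hθ'i, ?_⟩
      · show (fun j => ((θ' j : ℤ) : ℝ)) ∈ c
        rw [hc, Set.mem_setOf_eq]
        show ∑ i, (a i : ℝ) * ((θ' i : ℤ) : ℝ) = ((a₀ : ℤ) : ℝ)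
        exact_mod_cast hint
      · intro j
        by_cases hji : j = i
        · rw [hji, hθ'i]
          rcases hd' with rfl|rfl
          · exact ⟨le_refl _, hlu i⟩
          · exact ⟨hlu i, le_refl _⟩
        · by_cases hjz : j = z
          · subst hjz
            rw [hθ'z]
            exact ⟨htl, htu⟩
          · rw [hθ'j j hji hjz]
            have hjm : j ∈ S := Finset.mem_erase.mpr ⟨hji,
              Finset.mem_erase.mpr ⟨hjz, Finset.mem_univ j⟩⟩
            exact aux_unit_bound (a j) (l j) (u j) (v j) (hlu j) (ha j hjz)
              (by simpa only [hm] using (hv j hjm).1)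
              (by simpa only [hM] using (hv j hjm).2)
  have easy : BoundsZConsistent D hD c → BoundsRConsistent D hD c := by
    intro hZ i d hd
    obtain ⟨θ, hθc, hθi, hθb⟩ := hZ i d hd
    refine ⟨fun j => (θ j : ℝ), hθc, ?_, fun j => ⟨?_, ?_⟩⟩
    · show ((θ i : ℤ) : ℝ) = ((d : ℤ) : ℝ)
      rw [hθi]
    · show ((D j).min' (hD j) : ℝ) ≤ ((θ j : ℤ) : ℝ)
      exact_mod_cast (hθb j).1
    · show ((θ j : ℤ) : ℝ) ≤ ((D j).max' (hD j) : ℝ)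
      exact_mod_cast (hθb j).2
  exact ⟨main, ⟨main, easy⟩⟩
end

section
/- Integral rounding of a real point with integral coordinate sum: let d : Fin n → ℝ and let l, u : Fin n → ℤ satisfy (l i : ℝ) ≤ d i ≤ (u i : ℝ) for all i. If the sum Σ_i d i is an integer s (i.e. Σ_i d i = (s : ℝ) for some s : ℤ), then there exist integers e : Fin n → ℤ with l i ≤ e i ≤ u i for all i and Σ_i e i = s. -/
theorem int_rounding_aux (n : ℕ) (l u : Fin n → ℤ) (hlu : ∀ i, l i ≤ u i)
    (s : ℤ) (h1 : ∑ i, l i ≤ s) (h2 : s ≤ ∑ i, u i) :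
    ∃ e : Fin n → ℤ, (∀ i, l i ≤ e i ∧ e i ≤ u i) ∧ ∑ i, e i = s := by
  induction n generalizing s with
  | zero =>
    refine ⟨fun i => 0, fun i => i.elim0, ?_⟩
    simp at h1 h2 ⊢
    omega
  | succ n ih =>
    rw [Fin.sum_univ_succ] at h1 h2
    set e0 : ℤ := min (u 0) (s - ∑ i : Fin n, l i.succ) with he0
    have hcase : e0 = u 0 ∨ e0 = s - ∑ i : Fin n, l i.succ := min_choice _ _
    have hb1 : e0 ≤ u 0 := min_le_left _ _
    have hb2 : e0 ≤ s - ∑ i : Fin n, l i.succ := min_le_right _ _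
    clear_value e0
    have hsums : ∑ i : Fin n, l i.succ ≤ ∑ i : Fin n, u i.succ :=
      Finset.sum_le_sum fun i _ => hlu i.succ
    have hl0 : l 0 ≤ e0 := by
      have := hlu 0
      omega
    obtain ⟨e', he', hsum⟩ := ih (fun i => l i.succ) (fun i => u i.succ)
      (fun i => hlu i.succ) (s - e0) (by beta_reduce; omega) (by beta_reduce; omega)
    refine ⟨Fin.cons e0 e', fun i => ?_, ?_⟩
    · refine Fin.cases ?_ ?_ i
      · exact ⟨hl0, hb1⟩
      · intro j; simpa using he' j
    · rw [Fin.sum_univ_succ]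
      simp [hsum]

/-- Integral rounding of a real point with integral coordinate sum: if
`(l i : ℝ) ≤ d i ≤ (u i : ℝ)` for all `i` and `Σ_i d i` equals an integer `s`,
then there are integers `e i` with `l i ≤ e i ≤ u i` and `Σ_i e i = s`. -/
theorem exists_integral_rounding (n : ℕ) (d : Fin n → ℝ) (l u : Fin n → ℤ)
    (hl : ∀ i, (l i : ℝ) ≤ d i) (hu : ∀ i, d i ≤ (u i : ℝ))
    (s : ℤ) (hs : ∑ i, d i = (s : ℝ)) :
    ∃ e : Fin n → ℤ, (∀ i, l i ≤ e i ∧ e i ≤ u i) ∧ ∑ i, e i = s := by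
  apply int_rounding_aux n l u
  · intro i
    exact_mod_cast (hl i).trans (hu i)
  · have : ((∑ i, l i : ℤ) : ℝ) ≤ (s : ℝ) := by
      push_cast
      rw [← hs]
      exact Finset.sum_le_sum fun i _ => hl i
    exact_mod_cast this
  · have : ((s : ℤ) : ℝ) ≤ ((∑ i, u i : ℤ) : ℝ) := by
      push_cast
      rw [← hs]
      exact Finset.sum_le_sum fun i _ => hu i
    exact_mod_cast this
end
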